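/- arXiv:1809.02526 — 5 statements merged into one kernel-verified Lean document; each statement's English description precedes it below -/
import Mathlib

section
/- Let L be a Lie algebra over a commutative ring k and let D : L → L be a k-linear derivation (D[a,b] = [Da,b] + [a,Db]) satisfying D ∘ D = 0. Then the derived bracket [a,b]_D := [Da, b] satisfies the left Leibniz (Loday) identity: [a,[b,c]_D]_D = [[a,b]_D, c]_D + [b,[a,c]_D]_D for all a, b, c ∈ L. -/
theorem apply_lie_apply_of_comp_self_eq_zero {L : Type*} [LieRing L] (D : L → L)
    (hder : ∀ a b : L, D ⁅a, b⁆ = ⁅D a, b⁆ + ⁅a, D b⁆) (hsq : ∀ a : L, D (D a) = 0)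
    (a b : L) : D ⁅D a, b⁆ = ⁅D a, D b⁆ := by
  rw [hder, hsq, zero_lie, zero_add]

/-- The derived bracket `[a,b]_D := ⁅D a, b⁆` of a differential Lie algebra
satisfies the left Leibniz (Loday) identity. -/
theorem derived_bracket_leibniz {k L : Type*} [CommRing k] [LieRing L] [LieAlgebra k L]
    (D : L →ₗ[k] L)
    (hder : ∀ a b : L, D ⁅a, b⁆ = ⁅D a, b⁆ + ⁅a, D b⁆)
    (hsq : ∀ a : L, D (D a) = 0)
    (db : L → L → L) (hdb : ∀ a b : L, db a b = ⁅D a, b⁆)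
    (a b c : L) :
    db a (db b c) = db (db a b) c + db b (db a c) := by
  simp only [hdb, apply_lie_apply_of_comp_self_eq_zero D hder hsq]
  exact leibniz_lie (D a) (D b) c
end

section
/- Let V be a module over a commutative ring k with a bilinear bracket [·,·] : V × V → V satisfying the left Leibniz (Loday) identity [a,[b,c]] = [[a,b],c] + [b,[a,c]], and let D : V → V be a k-linear map that is a derivation of the bracket (D[a,b] = [Da,b] + [a,Db]) and satisfies D ∘ D = 0. Then the derived bracket [a,b]_D := [Da, b] also satisfies the left Leibniz identity: [a,[b,c]_D]_D = [[a,b]_D, c]_D + [b,[a,c]_D]_D for all a, b, c ∈ V. -/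
/-! Because `D ∘ D = 0`, the derivation rule collapses to `D [Da, b] = [Da, Db]`, so
`[[a, b]_D, c]_D = [[Da, Db], c]`. The Leibniz identity of the derived bracket for `a, b, c` is
therefore the Leibniz identity of the original bracket for `Da, Db, c`. -/

section DerivedBracket

variable {k V : Type*} [CommSemiring k] [AddCommMonoid V] [Module k V]

def derivedBracket (B : V →ₗ[k] V →ₗ[k] V) (D : V →ₗ[k] V) : V →ₗ[k] V →ₗ[k] V :=
  B ∘ₗ D

@[simp]
theorem derivedBracket_apply (B : V →ₗ[k] V →ₗ[k] V) (D : V →ₗ[k] V) (a b : V) :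
    derivedBracket B D a b = B (D a) b :=
  rfl

theorem map_derivedBracket {B : V →ₗ[k] V →ₗ[k] V} {D : V →ₗ[k] V}
    (hder : ∀ a b : V, D (B a b) = B (D a) b + B a (D b)) (hsq : ∀ a : V, D (D a) = 0)
    (a b : V) : D (derivedBracket B D a b) = B (D a) (D b) := by
  rw [derivedBracket_apply, hder, hsq, map_zero, LinearMap.zero_apply, zero_add]

theorem derivedBracket_leibniz {B : V →ₗ[k] V →ₗ[k] V} {D : V →ₗ[k] V}
    (hleib : ∀ a b c : V, B a (B b c) = B (B a b) c + B b (B a c))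
    (hder : ∀ a b : V, D (B a b) = B (D a) b + B a (D b)) (hsq : ∀ a : V, D (D a) = 0)
    (a b c : V) :
    derivedBracket B D a (derivedBracket B D b c) =
      derivedBracket B D (derivedBracket B D a b) c +
        derivedBracket B D b (derivedBracket B D a c) := by
  rw [derivedBracket_apply (a := derivedBracket B D a b), map_derivedBracket hder hsq]
  exact hleib (D a) (D b) c

end DerivedBracket

/-- The derived bracket of a differential (left) Loday/Leibniz algebra is
again a left Loday bracket. -/
theorem derived_bracket_of_loday_is_loday {k V : Type*} [CommRing k] [AddCommGroup V]
    [Module k V]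
    (B : V →ₗ[k] V →ₗ[k] V)
    (hleib : ∀ a b c : V, B a (B b c) = B (B a b) c + B b (B a c))
    (D : V →ₗ[k] V)
    (hder : ∀ a b : V, D (B a b) = B (D a) b + B a (D b))
    (hsq : ∀ a : V, D (D a) = 0)
    (db : V → V → V) (hdb : ∀ a b : V, db a b = B (D a) b)
    (a b c : V) :
    db a (db b c) = db (db a b) c + db b (db a c) := by
  obtain rfl : db = fun x y => derivedBracket B D x y := funext₂ hdb
  exact derivedBracket_leibniz hleib hder hsq a b c
end

section
/- Let k be a commutative ring, A an associative k-algebra, and μ : A × A → A a k-bilinear Hochschild 2-cocycle (a·μ(b,c) − μ(ab,c) + μ(a,bc) − μ(a,b)·c = 0 for all a,b,c). Define the trilinear map O(a,b,c) := μ(μ(a,b), c) − μ(a, μ(b,c)). Then O is a Hochschild 3-cocycle: a·O(b,c,d) − O(ab, c, d) + O(a, bc, d) − O(a, b, cd) + O(a,b,c)·d = 0 for all a, b, c, d ∈ A. -/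
/-!
For an arbitrary bilinear `μ`, expanding `δO` and regrouping shows that it equals
`-δμ(μ(a,b),c,d) + δμ(a,μ(b,c),d) - δμ(a,b,μ(c,d)) + μ(δμ(a,b,c),d) + μ(a,δμ(b,c,d))`;
every term vanishes when `μ` is a 2-cocycle.
-/

namespace Hochschild

variable {A : Type*} [Ring A]

def coboundary₂ (f : A → A → A) (a b c : A) : A :=
  a * f b c - f (a * b) c + f a (b * c) - f a b * c

def coboundary₃ (g : A → A → A → A) (a b c d : A) : A :=
  a * g b c d - g (a * b) c d + g a (b * c) d - g a b (c * d) + g a b c * d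

variable {R : Type*} [CommSemiring R] [Module R A]

def obstruction (μ : A →ₗ[R] A →ₗ[R] A) (a b c : A) : A :=
  μ (μ a b) c - μ a (μ b c)

theorem coboundary₃_obstruction (μ : A →ₗ[R] A →ₗ[R] A) (a b c d : A) :
    coboundary₃ (obstruction μ) a b c d =
      -coboundary₂ (μ · ·) (μ a b) c d + coboundary₂ (μ · ·) a (μ b c) d
        - coboundary₂ (μ · ·) a b (μ c d) + μ (coboundary₂ (μ · ·) a b c) d
        + μ a (coboundary₂ (μ · ·) b c d) := by
  simp only [coboundary₂, coboundary₃, obstruction, map_sub, map_add, LinearMap.sub_apply,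
    LinearMap.add_apply]
  noncomm_ring

theorem coboundary₃_obstruction_eq_zero {μ : A →ₗ[R] A →ₗ[R] A}
    (hμ : ∀ a b c, coboundary₂ (μ · ·) a b c = 0) (a b c d : A) :
    coboundary₃ (obstruction μ) a b c d = 0 := by
  simp [coboundary₃_obstruction, hμ]

end Hochschild

/-- the primary obstruction `O(a,b,c) = μ(μ(a,b),c) − μ(a,μ(b,c))` associated
to a Hochschild 2-cocycle μ is a Hochschild 3-cocycle. -/
theorem obstruction_is_three_cocycle {k A : Type*} [CommRing k] [Ring A] [Algebra k A]
    (μ : A →ₗ[k] A →ₗ[k] A)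
    (hcocycle : ∀ a b c : A, a * μ b c - μ (a * b) c + μ a (b * c) - μ a b * c = 0)
    (O : A → A → A → A)
    (hO : ∀ a b c : A, O a b c = μ (μ a b) c - μ a (μ b c))
    (a b c d : A) :
    a * O b c d - O (a * b) c d + O a (b * c) d - O a b (c * d) + O a b c * d = 0 := by
  obtain rfl : O = Hochschild.obstruction μ := funext₃ hO
  exact Hochschild.coboundary₃_obstruction_eq_zero hcocycle a b c d
end

section
/- Let k be a commutative ring, A a commutative associative k-algebra, and μ₁, μ₂ : A × A → A k-bilinear maps. Suppose the product on A ⊕ A ⊕ A (representing A[t]/(t³)) given by a ⋆ b = ab + t·μ₁(a,b) + t²·μ₂(a,b), extended t-linearly, is associative. Define B(a,b) := μ₁(a,b) − μ₁(b,a). Then B is a Poisson bracket on A: it is skew-symmetric, satisfies the Leibniz rule B(a, bc) = B(a,b)·c + b·B(a,c), and satisfies the Jacobi identity B(a, B(b,c)) + B(b, B(c,a)) + B(c, B(a,b)) = 0 for all a, b, c ∈ A. -/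
/-!
Evaluating the associativity of `⋆` on constant triples `(a, 0, 0)` and comparing the
coefficients of `t` and `t²` gives `δμ₁ = 0` and `μ₁(μ₁(a,b),c) − μ₁(a,μ₁(b,c)) = δμ₂(a,b,c)`,
where `δ` is the Hochschild coboundary of the commutative algebra `A`.
The first, skew-symmetrized, is the Leibniz rule. For the second, the Jacobiator of the
commutator bracket of any bilinear map is minus the alternating sum over `S₃` of its associator,
and the alternating sum of `δμ₂` vanishes because `A` is commutative.
-/

def altSum3 {M : Type*} [AddCommGroup M] (f : M → M → M → M) (a b c : M) : M :=
  f a b c - f b a c + f b c a - f c b a + f c a b - f a c b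

def hochschildCoboundary {A : Type*} [CommRing A] (m : A → A → A) (a b c : A) : A :=
  a * m b c - m (a * b) c + m a (b * c) - m a b * c

theorem jacobi_commutator_eq_neg_altSum3_associator {R M : Type*} [CommSemiring R]
    [AddCommGroup M] [Module R M] (μ : M →ₗ[R] M →ₗ[R] M) (a b c : M) :
    (μ a (μ b c - μ c b) - μ (μ b c - μ c b) a) + (μ b (μ c a - μ a c) - μ (μ c a - μ a c) b)
      + (μ c (μ a b - μ b a) - μ (μ a b - μ b a) c)
      = -altSum3 (fun x y z => μ (μ x y) z - μ x (μ y z)) a b c := by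
  simp only [altSum3, map_sub, LinearMap.sub_apply]
  abel

section CommRing

variable {A : Type*} [CommRing A]

theorem altSum3_hochschildCoboundary (m : A → A → A) (a b c : A) :
    altSum3 (hochschildCoboundary m) a b c = 0 := by
  simp only [altSum3, hochschildCoboundary, mul_comm b a, mul_comm c b, mul_comm a c]
  ring

theorem commutator_mul_of_hochschildCoboundary_eq_zero (m : A → A → A)
    (hm : ∀ a b c, hochschildCoboundary m a b c = 0) (a b c : A) :
    m a (b * c) - m (b * c) a = (m a b - m b a) * c + b * (m a c - m c a) := by
  have habc := hm a b c
  have hbac := hm b a c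
  have hbca := hm b c a
  simp only [hochschildCoboundary, mul_comm b a, mul_comm c a] at habc hbac hbca
  linear_combination habc - hbac + hbca

variable {R : Type*} [CommRing R] [Algebra R A] {μ₁ μ₂ : A →ₗ[R] A →ₗ[R] A}
  {star : A × A × A → A × A × A → A × A × A}

theorem coeff_identities_of_star_assoc
    (hstar : ∀ p q : A × A × A,
      star p q = (p.1 * q.1,
        p.1 * q.2.1 + p.2.1 * q.1 + μ₁ p.1 q.1,
        p.1 * q.2.2 + p.2.1 * q.2.1 + p.2.2 * q.1 + μ₁ p.1 q.2.1 + μ₁ p.2.1 q.1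
          + μ₂ p.1 q.1))
    (hassoc : ∀ p q r : A × A × A, star (star p q) r = star p (star q r)) (a b c : A) :
    (μ₁ a b * c + μ₁ (a * b) c = a * μ₁ b c + μ₁ a (b * c)) ∧
      (μ₂ a b * c + μ₁ (μ₁ a b) c + μ₂ (a * b) c
        = a * μ₂ b c + μ₁ a (μ₁ b c) + μ₂ a (b * c)) := by
  have h := hassoc (a, 0, 0) (b, 0, 0) (c, 0, 0)
  simp only [hstar, Prod.mk.injEq, map_zero, LinearMap.zero_apply, mul_zero, zero_mul,
    add_zero, zero_add] at h
  exact h.2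

end CommRing

/-- the skew-symmetrization of the first-order term of an associative star
product (truncated at order t³, elements `a₀ + a₁ t + a₂ t²` represented as triples) is a
Poisson bracket on the underlying commutative algebra. -/
theorem star_product_first_order_term_is_poisson {k A : Type*} [CommRing k] [CommRing A]
    [Algebra k A] (μ₁ μ₂ : A →ₗ[k] A →ₗ[k] A)
    (star : A × A × A → A × A × A → A × A × A)
    (hstar : ∀ p q : A × A × A,
      star p q = (p.1 * q.1,
        p.1 * q.2.1 + p.2.1 * q.1 + μ₁ p.1 q.1,
        p.1 * q.2.2 + p.2.1 * q.2.1 + p.2.2 * q.1 + μ₁ p.1 q.2.1 + μ₁ p.2.1 q.1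
          + μ₂ p.1 q.1))
    (hassoc : ∀ p q r : A × A × A, star (star p q) r = star p (star q r))
    (B : A → A → A) (hB : ∀ a b : A, B a b = μ₁ a b - μ₁ b a) :
    (∀ a b : A, B a b = -B b a) ∧
    (∀ a b c : A, B a (b * c) = B a b * c + b * B a c) ∧
    (∀ a b c : A, B a (B b c) + B b (B c a) + B c (B a b) = 0) := by
  obtain rfl : B = fun a b => μ₁ a b - μ₁ b a := funext₂ hB
  have hδμ₁ (a b c : A) : hochschildCoboundary (μ₁ · ·) a b c = 0 := by
    rw [hochschildCoboundary]
    linear_combination -(coeff_identities_of_star_assoc hstar hassoc a b c).1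
  have hassoc₁ : (fun a b c => μ₁ (μ₁ a b) c - μ₁ a (μ₁ b c)) = hochschildCoboundary (μ₂ · ·) := by
    ext a b c
    rw [hochschildCoboundary]
    linear_combination (coeff_identities_of_star_assoc hstar hassoc a b c).2
  refine ⟨fun a b => (neg_sub _ _).symm,
    commutator_mul_of_hochschildCoboundary_eq_zero _ hδμ₁, fun a b c => ?_⟩
  rw [jacobi_commutator_eq_neg_altSum3_associator, hassoc₁, altSum3_hochschildCoboundary, neg_zero]
end

section
/- For n ≥ 1, define the Nambu bracket of n smooth functions f₁, …, fₙ : ℝⁿ → ℝ (i.e. each ContDiff of order ∞ on EuclideanSpace ℝ (Fin n)) by {f₁, …, fₙ}(x) := det M(x), where M(x) is the n × n matrix with entries M(x)ᵢⱼ = ∂fᵢ/∂xⱼ(x) (the derivative of fᵢ at x in the j-th coordinate direction). Then the Nambu bracket satisfies the Filippov (fundamental/characteristic) identity: for all smooth g₁, …, g_{n−1}, f₁, …, fₙ : ℝⁿ → ℝ, {g₁, …, g_{n−1}, {f₁, …, fₙ}} = Σ_{k=1}^{n} {f₁, …, f_{k−1}, {g₁, …, g_{n−1}, f_k}, f_{k+1},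 …, fₙ}. -/
/-- The Nambu bracket of `n` functions on `ℝⁿ`: the Jacobian determinant, i.e. the
determinant of the matrix whose `(i,j)` entry is the derivative of `fᵢ` at `x` in the
`j`-th coordinate direction. -/
noncomputable def nambu (n : ℕ) (f : Fin n → EuclideanSpace ℝ (Fin n) → ℝ)
    (x : EuclideanSpace ℝ (Fin n)) : ℝ :=
  (Matrix.of fun i j : Fin n =>
    fderiv ℝ (f i) x (EuclideanSpace.single j (1 : ℝ))).det

open Matrix

lemma det_updateRow_expand {n : ℕ} (M : Matrix (Fin n) (Fin n) ℝ) (k : Fin n)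
    (u : Fin n → ℝ) :
    (M.updateRow k u).det = ∑ l, u l * (M.updateRow k (Pi.single l 1)).det := by
  have h : ∀ s : Finset (Fin n),
      (M.updateRow k (∑ l ∈ s, u l • (Pi.single l 1 : Fin n → ℝ))).det
        = ∑ l ∈ s, u l * (M.updateRow k (Pi.single l 1)).det := by
    intro s
    induction s using Finset.induction with
    | empty =>
        rw [Finset.sum_empty, Finset.sum_empty]
        exact Matrix.det_eq_zero_of_row_eq_zero k (fun j => by simp)
    | @insert a s ha ih =>
        rw [Finset.sum_insert ha, Finset.sum_insert ha, Matrix.det_updateRow_add,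
          Matrix.det_updateRow_smul, ih]
  have hu : u = ∑ l, u l • (Pi.single l 1 : Fin n → ℝ) := by
    funext j
    simp [Finset.sum_apply, Pi.single_apply]
  conv_lhs => rw [hu]
  exact h Finset.univ

lemma det_updateRow_updateRow_antisymm {n : ℕ} (M : Matrix (Fin n) (Fin n) ℝ)
    {i i' : Fin n} (h : i ≠ i') (u w : Fin n → ℝ) :
    ((M.updateRow i u).updateRow i' w).det = -(((M.updateRow i w).updateRow i' u).det) := by
  have key : (Function.update (Function.update (M : Fin n → Fin n → ℝ) i u) i' w)
      ∘ (Equiv.swap i i') = Function.update (Function.update (M : Fin n → Fin n → ℝ) i w) i' u := by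
    funext a
    simp only [Function.comp_apply]
    rcases eq_or_ne a i with rfl | hai
    · rw [Equiv.swap_apply_left]
      simp [Function.update_apply, h, h.symm]
      exact (Function.update_self a w (M : Fin n → Fin n → ℝ)).symm
    · rcases eq_or_ne a i' with rfl | hai'
      · rw [Equiv.swap_apply_right]
        simp [Function.update_apply, h, h.symm]
        exact Function.update_self _ _ _
      · rw [Equiv.swap_apply_of_ne_of_ne hai hai']
        simp [Function.update_apply, hai, hai']
        exact (Function.update_of_ne hai _ _).trans (Function.update_of_ne hai _ _).symm
  have h2 : Matrix.detRowAlternating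
        (Function.update (Function.update (M : Fin n → Fin n → ℝ) i w) i' u)
      = - Matrix.detRowAlternating
        (Function.update (Function.update (M : Fin n → Fin n → ℝ) i u) i' w) := by
    rw [← key]
    exact (Matrix.detRowAlternating (R := ℝ) (n := Fin n)).map_swap _ h
  show Matrix.detRowAlternating (Function.update (Function.update (M : Fin n → Fin n → ℝ) i u) i' w)
      = - Matrix.detRowAlternating (Function.update (Function.update (M : Fin n → Fin n → ℝ) i w) i' u)
  rw [h2, neg_neg]

lemma of_snoc_updateRow_last {m : ℕ} (C : Fin m → Fin (m+1) → ℝ) (w u : Fin (m+1) → ℝ) :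
    (Matrix.of (Fin.snoc C w)).updateRow (Fin.last m) u = Matrix.of (Fin.snoc C u) :=
  congrArg Matrix.of (Fin.update_snoc_last ..)

lemma of_snoc_updateRow_castSucc {m : ℕ} (C : Fin m → Fin (m+1) → ℝ) (w u : Fin (m+1) → ℝ)
    (r : Fin m) :
    (Matrix.of (Fin.snoc C w)).updateRow r.castSucc u
      = Matrix.of (Fin.snoc (Function.update C r u) w) :=
  congrArg Matrix.of (Fin.snoc_update ..).symm

lemma det_snoc_last_expand {m : ℕ} (C : Fin m → Fin (m+1) → ℝ) (u : Fin (m+1) → ℝ) :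
    (Matrix.of (Fin.snoc C u)).det
      = ∑ l, u l * (Matrix.of (Fin.snoc C (Pi.single l 1))).det := by
  rw [← of_snoc_updateRow_last C u u, det_updateRow_expand]
  simp only [of_snoc_updateRow_last]

lemma det_snoc_castSucc_expand {m : ℕ} (C : Fin m → Fin (m+1) → ℝ) (w u : Fin (m+1) → ℝ)
    (r : Fin m) :
    (Matrix.of (Fin.snoc (Function.update C r u) w)).det
      = ∑ p, u p * (Matrix.of (Fin.snoc (Function.update C r (Pi.single p 1)) w)).det := by
  rw [← of_snoc_updateRow_castSucc C w u r, det_updateRow_expand]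
  simp only [of_snoc_updateRow_castSucc]

lemma det_snoc_single_antisymm {m : ℕ} (C : Fin m → Fin (m+1) → ℝ) (r : Fin m)
    (p l : Fin (m+1)) :
    (Matrix.of (Fin.snoc (Function.update C r (Pi.single p 1)) (Pi.single l (1:ℝ)))).det
      = -(Matrix.of (Fin.snoc (Function.update C r (Pi.single l 1)) (Pi.single p 1))).det := by
  have hne : (Fin.castSucc r) ≠ Fin.last m := (Fin.castSucc_lt_last r).ne
  have e : ∀ u w : Fin (m+1) → ℝ,
      ((Matrix.of (Fin.snoc C (0 : Fin (m+1) → ℝ))).updateRow r.castSucc u).updateRow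
          (Fin.last m) w
        = Matrix.of (Fin.snoc (Function.update C r u) w) := by
    intro u w
    rw [of_snoc_updateRow_castSucc, of_snoc_updateRow_last]
  rw [← e, ← e, det_updateRow_updateRow_antisymm _ hne]

lemma adj_contract {n : ℕ} (A : Matrix (Fin n) (Fin n) ℝ) (j l : Fin n) :
    ∑ k, A k l * (A.updateRow k (Pi.single j 1)).det = A.det * (if j = l then 1 else 0) := by
  calc ∑ k, A k l * (A.updateRow k (Pi.single j 1)).det
      = ∑ k, A.adjugate j k * A k l := by
        refine Finset.sum_congr rfl fun k _ => ?_
        rw [Matrix.adjugate_apply, mul_comm]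
    _ = (A.adjugate * A) j l := (Matrix.mul_apply).symm
    _ = (A.det • (1 : Matrix (Fin n) (Fin n) ℝ)) j l := by rw [Matrix.adjugate_mul]
    _ = A.det * (if j = l then 1 else 0) := by
        simp [Matrix.smul_apply, Matrix.one_apply]

lemma key_contract {n : ℕ} (A : Matrix (Fin n) (Fin n) ℝ) (c : Fin n → Fin n → ℝ) :
    (∑ k, ∑ j, ∑ l, c j l * (A k l * (A.updateRow k (Pi.single j 1)).det))
      = A.det * ∑ j, c j j := by
  rw [Finset.sum_comm]
  calc ∑ j, ∑ k, ∑ l, c j l * (A k l * (A.updateRow k (Pi.single j 1)).det)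
      = ∑ j, ∑ l, ∑ k, c j l * (A k l * (A.updateRow k (Pi.single j 1)).det) :=
        Finset.sum_congr rfl fun j _ => Finset.sum_comm
    _ = ∑ j, ∑ l, c j l * (A.det * (if j = l then 1 else 0)) := by
        refine Finset.sum_congr rfl fun j _ => Finset.sum_congr rfl fun l _ => ?_
        rw [← Finset.mul_sum, adj_contract]
    _ = A.det * ∑ j, c j j := by
        rw [Finset.mul_sum]
        refine Finset.sum_congr rfl fun j _ => ?_
        simp only [mul_ite, mul_one, mul_zero, Finset.sum_ite_eq, Finset.mem_univ, if_true]
        ring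

lemma gpart_zero {m : ℕ} (A : Matrix (Fin (m+1)) (Fin (m+1)) ℝ)
    (B : Fin m → Fin (m+1) → ℝ) (G : Fin m → Matrix (Fin (m+1)) (Fin (m+1)) ℝ)
    (hG : ∀ r j l, G r j l = G r l j) :
    (∑ k, ∑ j, (∑ r, (Matrix.of (Fin.snoc (Function.update B r (G r j)) (A k))).det)
        * (A.updateRow k (Pi.single j 1)).det) = 0 := by
  -- abbreviation
  set q : Fin m → Fin (m+1) → Fin (m+1) → ℝ := fun r p l =>
    (Matrix.of (Fin.snoc (Function.update B r (Pi.single p 1)) (Pi.single l (1:ℝ)))).det with hq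
  have hGzero : ∀ r, (∑ p, ∑ l, G r l p * q r p l) = 0 := by
    intro r
    have h1 : (∑ p, ∑ l, G r l p * q r p l) = -∑ p, ∑ l, G r l p * q r p l := by
      calc ∑ p, ∑ l, G r l p * q r p l
          = ∑ p, ∑ l, G r p l * -(q r l p) := by
            refine Finset.sum_congr rfl fun p _ => Finset.sum_congr rfl fun l _ => ?_
            rw [hG r l p]
            congr 1
            rw [hq]
            simp only
            rw [det_snoc_single_antisymm]
        _ = -∑ p, ∑ l, G r p l * q r l p := by
            simp [mul_neg, Finset.sum_neg_distrib]
        _ = -∑ l, ∑ p, G r p l * q r l p := by rw [Finset.sum_comm]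
        _ = -∑ p, ∑ l, G r l p * q r p l := rfl
    linarith
  have step1 : ∀ k j, (∑ r, (Matrix.of (Fin.snoc (Function.update B r (G r j)) (A k))).det)
      * (A.updateRow k (Pi.single j 1)).det
      = ∑ r, ∑ p, ∑ l, (G r j p * q r p l) * (A k l * (A.updateRow k (Pi.single j 1)).det) := by
    intro k j
    rw [Finset.sum_mul]
    refine Finset.sum_congr rfl fun r _ => ?_
    calc (Matrix.of (Fin.snoc (Function.update B r (G r j)) (A k))).det
          * (A.updateRow k (Pi.single j 1)).det
        = ∑ l, ∑ p, (G r j p * q r p l) * (A k l * (A.updateRow k (Pi.single j 1)).det) := by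
          rw [det_snoc_last_expand, Finset.sum_mul]
          refine Finset.sum_congr rfl fun l _ => ?_
          rw [det_snoc_castSucc_expand, Finset.mul_sum, Finset.sum_mul]
          refine Finset.sum_congr rfl fun p _ => ?_
          rw [hq]
          ring
      _ = ∑ p, ∑ l, (G r j p * q r p l) * (A k l * (A.updateRow k (Pi.single j 1)).det) :=
          Finset.sum_comm
  calc (∑ k, ∑ j, (∑ r, (Matrix.of (Fin.snoc (Function.update B r (G r j)) (A k))).det)
        * (A.updateRow k (Pi.single j 1)).det)
      = ∑ k, ∑ j, ∑ r, ∑ p, ∑ l, (G r j p * q r p l)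
          * (A k l * (A.updateRow k (Pi.single j 1)).det) := by
        exact Finset.sum_congr rfl fun k _ => Finset.sum_congr rfl fun j _ => step1 k j
    _ = ∑ k, ∑ r, ∑ j, ∑ p, ∑ l, (G r j p * q r p l)
          * (A k l * (A.updateRow k (Pi.single j 1)).det) :=
        Finset.sum_congr rfl fun k _ => Finset.sum_comm
    _ = ∑ k, ∑ r, ∑ p, ∑ j, ∑ l, (G r j p * q r p l)
          * (A k l * (A.updateRow k (Pi.single j 1)).det) :=
        Finset.sum_congr rfl fun k _ => Finset.sum_congr rfl fun r _ => Finset.sum_comm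
    _ = ∑ r, ∑ k, ∑ p, ∑ j, ∑ l, (G r j p * q r p l)
          * (A k l * (A.updateRow k (Pi.single j 1)).det) := Finset.sum_comm
    _ = ∑ r, ∑ p, ∑ k, ∑ j, ∑ l, (G r j p * q r p l)
          * (A k l * (A.updateRow k (Pi.single j 1)).det) :=
        Finset.sum_congr rfl fun r _ => Finset.sum_comm
    _ = ∑ r, ∑ p, A.det * ∑ j, G r j p * q r p j :=
        Finset.sum_congr rfl fun r _ => Finset.sum_congr rfl fun p _ =>
          key_contract A (fun j l => G r j p * q r p l)
    _ = A.det * ∑ r, ∑ p, ∑ j, G r j p * q r p j := by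
        simp only [Finset.mul_sum]
    _ = 0 := by
        rw [show (∑ r, ∑ p, ∑ j, G r j p * q r p j) = 0 from
          Finset.sum_eq_zero fun r _ => hGzero r, mul_zero]

lemma filippov_algebra {m : ℕ} (A : Matrix (Fin (m+1)) (Fin (m+1)) ℝ)
    (B : Fin m → Fin (m+1) → ℝ)
    (S : Fin (m+1) → Matrix (Fin (m+1)) (Fin (m+1)) ℝ)
    (G : Fin m → Matrix (Fin (m+1)) (Fin (m+1)) ℝ)
    (hS : ∀ k j l, S k j l = S k l j) (hG : ∀ r j l, G r j l = G r l j) :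
    (Matrix.of (Fin.snoc B (fun j => ∑ k, (A.updateRow k (S k j)).det))).det
      = ∑ k, (A.updateRow k (fun j =>
          (∑ r, (Matrix.of (Fin.snoc (Function.update B r (G r j)) (A k))).det)
          + (Matrix.of (Fin.snoc B (S k j))).det)).det := by
  have lhs_eq : (Matrix.of (Fin.snoc B (fun j => ∑ k, (A.updateRow k (S k j)).det))).det
      = ∑ k, ∑ j, ∑ l, S k j l * (A.updateRow k (Pi.single l 1)).det
          * (Matrix.of (Fin.snoc B (Pi.single j 1))).det := by
    rw [det_snoc_last_expand]
    calc ∑ j, (∑ k, (A.updateRow k (S k j)).det)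
            * (Matrix.of (Fin.snoc B (Pi.single j 1))).det
        = ∑ j, ∑ k, ∑ l, S k j l * (A.updateRow k (Pi.single l 1)).det
            * (Matrix.of (Fin.snoc B (Pi.single j 1))).det := by
          refine Finset.sum_congr rfl fun j _ => ?_
          rw [Finset.sum_mul]
          refine Finset.sum_congr rfl fun k _ => ?_
          rw [det_updateRow_expand, Finset.sum_mul]
      _ = ∑ k, ∑ j, ∑ l, S k j l * (A.updateRow k (Pi.single l 1)).det
            * (Matrix.of (Fin.snoc B (Pi.single j 1))).det := Finset.sum_comm
  have hpart : ∀ k, (∑ j, (Matrix.of (Fin.snoc B (S k j))).det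
        * (A.updateRow k (Pi.single j 1)).det)
      = ∑ j, ∑ l, S k j l * (A.updateRow k (Pi.single l 1)).det
          * (Matrix.of (Fin.snoc B (Pi.single j 1))).det := by
    intro k
    calc (∑ j, (Matrix.of (Fin.snoc B (S k j))).det * (A.updateRow k (Pi.single j 1)).det)
        = ∑ j, ∑ l, S k l j * (A.updateRow k (Pi.single j 1)).det
            * (Matrix.of (Fin.snoc B (Pi.single l 1))).det := by
          refine Finset.sum_congr rfl fun j _ => ?_
          rw [det_snoc_last_expand, Finset.sum_mul]
          refine Finset.sum_congr rfl fun l _ => ?_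
          rw [hS k j l]
          ring
      _ = ∑ l, ∑ j, S k l j * (A.updateRow k (Pi.single j 1)).det
            * (Matrix.of (Fin.snoc B (Pi.single l 1))).det := Finset.sum_comm
  calc (Matrix.of (Fin.snoc B (fun j => ∑ k, (A.updateRow k (S k j)).det))).det
      = ∑ k, ∑ j, ∑ l, S k j l * (A.updateRow k (Pi.single l 1)).det
          * (Matrix.of (Fin.snoc B (Pi.single j 1))).det := lhs_eq
    _ = 0 + ∑ k, ∑ j, ∑ l, S k j l * (A.updateRow k (Pi.single l 1)).det
          * (Matrix.of (Fin.snoc B (Pi.single j 1))).det := (zero_add _).symm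
    _ = (∑ k, ∑ j, (∑ r, (Matrix.of (Fin.snoc (Function.update B r (G r j)) (A k))).det)
            * (A.updateRow k (Pi.single j 1)).det)
        + ∑ k, ∑ j, (Matrix.of (Fin.snoc B (S k j))).det
            * (A.updateRow k (Pi.single j 1)).det := by
        rw [gpart_zero A B G hG]
        congr 1
        exact Finset.sum_congr rfl fun k _ => (hpart k).symm
    _ = ∑ k, ∑ j, ((∑ r, (Matrix.of (Fin.snoc (Function.update B r (G r j)) (A k))).det)
          + (Matrix.of (Fin.snoc B (S k j))).det) * (A.updateRow k (Pi.single j 1)).det := by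
        rw [← Finset.sum_add_distrib]
        refine Finset.sum_congr rfl fun k _ => ?_
        rw [← Finset.sum_add_distrib]
        exact Finset.sum_congr rfl fun j _ => (add_mul _ _ _).symm
    _ = ∑ k, (A.updateRow k (fun j =>
          (∑ r, (Matrix.of (Fin.snoc (Function.update B r (G r j)) (A k))).det)
          + (Matrix.of (Fin.snoc B (S k j))).det)).det := by
        refine Finset.sum_congr rfl fun k _ => ?_
        rw [det_updateRow_expand]

noncomputable def detCMM (n : ℕ) : ContinuousMultilinearMap ℝ (fun _ : Fin n => (Fin n → ℝ)) ℝ :=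
  { (Matrix.detRowAlternating (R := ℝ) (n := Fin n)).toMultilinearMap with
    cont := by
      have h : Continuous fun M : Fin n → Fin n → ℝ => (Matrix.of M).det :=
        Continuous.matrix_det (continuous_pi fun i => continuous_pi fun j =>
          (continuous_apply j).comp (continuous_apply i))
      exact h }

lemma nambu_fderiv_apply {n : ℕ} (f : Fin n → EuclideanSpace ℝ (Fin n) → ℝ)
    (hf : ∀ i, ContDiff ℝ (⊤ : ℕ∞) (f i)) (x v : EuclideanSpace ℝ (Fin n)) :
    fderiv ℝ (nambu n f) x v
      = ∑ k, ((Matrix.of fun i j : Fin n =>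
            fderiv ℝ (f i) x (EuclideanSpace.single j (1:ℝ))).updateRow k
          (fun l => fderiv ℝ (fderiv ℝ (f k)) x v (EuclideanSpace.single l (1:ℝ)))).det := by
  classical
  have hΦ : HasFDerivAt
      (fun (y : EuclideanSpace ℝ (Fin n)) (i j : Fin n) =>
        fderiv ℝ (f i) y (EuclideanSpace.single j (1:ℝ)))
      (ContinuousLinearMap.pi fun i => ContinuousLinearMap.pi fun j =>
        (fderiv ℝ (fderiv ℝ (f i)) x).flip (EuclideanSpace.single j (1:ℝ))) x := by
    rw [hasFDerivAt_pi]
    intro i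
    rw [hasFDerivAt_pi]
    intro j
    have hd : HasFDerivAt (fderiv ℝ (f i)) (fderiv ℝ (fderiv ℝ (f i)) x) x :=
      ((((hf i).fderiv_right (m := 1) (by exact WithTop.coe_le_coe.mpr le_top)).differentiable one_ne_zero) x).hasFDerivAt
    have h2 := hd.clm_apply (hasFDerivAt_const (EuclideanSpace.single j (1:ℝ)) x)
    simpa using h2
  have hcomp :=
    ((detCMM n).hasFDerivAt
      (fun i j => fderiv ℝ (f i) x (EuclideanSpace.single j (1:ℝ)))).comp x hΦ
  have hcomp' : HasFDerivAt (fun y => detCMM n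
      (fun i j => fderiv ℝ (f i) y (EuclideanSpace.single j (1:ℝ))))
      (((detCMM n).linearDeriv fun i j => (fderiv ℝ (f i) x) (EuclideanSpace.single j 1)).comp
      (ContinuousLinearMap.pi fun i =>
        ContinuousLinearMap.pi fun j =>
          (fderiv ℝ (fderiv ℝ (f i)) x).flip (EuclideanSpace.single j 1))) x := hcomp
  have hnambu : nambu n f = fun y => detCMM n
      (fun i j => fderiv ℝ (f i) y (EuclideanSpace.single j (1:ℝ))) := rfl
  rw [hnambu, hcomp'.fderiv]
  rw [ContinuousLinearMap.coe_comp', Function.comp_apply,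
    ContinuousMultilinearMap.linearDeriv_apply]
  rfl

noncomputable def drow {n : ℕ} (h : EuclideanSpace ℝ (Fin n) → ℝ)
    (x : EuclideanSpace ℝ (Fin n)) : Fin n → ℝ :=
  fun j => fderiv ℝ h x (EuclideanSpace.single j (1:ℝ))

noncomputable def hess {n : ℕ} (h : EuclideanSpace ℝ (Fin n) → ℝ)
    (x : EuclideanSpace ℝ (Fin n)) : Matrix (Fin n) (Fin n) ℝ :=
  Matrix.of fun j l =>
    fderiv ℝ (fderiv ℝ h) x (EuclideanSpace.single j (1:ℝ)) (EuclideanSpace.single l (1:ℝ))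

lemma nambu_fderiv_apply' {n : ℕ} (f : Fin n → EuclideanSpace ℝ (Fin n) → ℝ)
    (hf : ∀ i, ContDiff ℝ (⊤ : ℕ∞) (f i)) (x : EuclideanSpace ℝ (Fin n)) (j : Fin n) :
    fderiv ℝ (nambu n f) x (EuclideanSpace.single j (1:ℝ))
      = ∑ k, ((Matrix.of fun i => drow (f i) x).updateRow k (hess (f k) x j)).det :=
  nambu_fderiv_apply f hf x _


/-- Takhtajan: the Nambu bracket on smooth functions on `ℝⁿ` (here
`n = m + 1 ≥ 1`) satisfies the Filippov (fundamental/characteristic) identity: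
`{g₁, …, g_{n−1}, {f₁, …, fₙ}} = Σₖ {f₁, …, {g₁, …, g_{n−1}, fₖ}, …, fₙ}`. -/
theorem nambu_filippov (m : ℕ)
    (g : Fin m → EuclideanSpace ℝ (Fin (m + 1)) → ℝ)
    (f : Fin (m + 1) → EuclideanSpace ℝ (Fin (m + 1)) → ℝ)
    (hg : ∀ i, ContDiff ℝ (⊤ : ℕ∞) (g i)) (hf : ∀ i, ContDiff ℝ (⊤ : ℕ∞) (f i))
    (x : EuclideanSpace ℝ (Fin (m + 1))) :
    nambu (m + 1) (Fin.snoc g (nambu (m + 1) f)) x =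
      ∑ k : Fin (m + 1),
        nambu (m + 1) (Function.update f k (nambu (m + 1) (Fin.snoc g (f k)))) x := by
  classical
  have hS : ∀ k : Fin (m+1), ∀ j l : Fin (m+1), hess (f k) x j l = hess (f k) x l j := by
    intro k j l
    exact ((hf k).contDiffAt.isSymmSndFDerivAt (by rw [minSmoothness_of_isRCLikeNormedField]; exact WithTop.coe_le_coe.mpr le_top))
      (EuclideanSpace.single j (1:ℝ)) (EuclideanSpace.single l (1:ℝ))
  have hG : ∀ r : Fin m, ∀ j l : Fin (m+1), hess (g r) x j l = hess (g r) x l j := by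
    intro r j l
    exact ((hg r).contDiffAt.isSymmSndFDerivAt (by rw [minSmoothness_of_isRCLikeNormedField]; exact WithTop.coe_le_coe.mpr le_top))
      (EuclideanSpace.single j (1:ℝ)) (EuclideanSpace.single l (1:ℝ))
  have hsnoc_smooth : ∀ k, ∀ i, ContDiff ℝ (⊤ : ℕ∞)
      ((Fin.snoc g (f k) : Fin (m+1) → EuclideanSpace ℝ (Fin (m+1)) → ℝ) i) := by
    intro k i
    refine Fin.lastCases ?_ ?_ i
    · simpa using hf k
    · intro r; simpa using hg r
  have hmat0 : ∀ k, (Matrix.of fun i =>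
        drow ((Fin.snoc g (f k) : Fin (m+1) → EuclideanSpace ℝ (Fin (m+1)) → ℝ) i) x)
      = Matrix.of (Fin.snoc (fun r => drow (g r) x) (drow (f k) x)) := by
    intro k
    refine congrArg Matrix.of (funext fun i => ?_)
    refine Fin.lastCases ?_ ?_ i
    · simp
    · intro r; simp
  have hw : ∀ k (j : Fin (m+1)),
      fderiv ℝ (nambu (m+1) (Fin.snoc g (f k))) x (EuclideanSpace.single j (1:ℝ))
        = (∑ r, (Matrix.of (Fin.snoc (Function.update (fun r' => drow (g r') x) r (hess (g r) x j))
              ((Matrix.of fun i => drow (f i) x) k))).det)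
          + (Matrix.of (Fin.snoc (fun r => drow (g r) x) (hess (f k) x j))).det := by
    intro k j
    rw [nambu_fderiv_apply' _ (hsnoc_smooth k) x j, Fin.sum_univ_castSucc]
    simp only [Fin.snoc_castSucc, Fin.snoc_last, hmat0 k]
    congr 1
    · refine Finset.sum_congr rfl fun r _ => ?_
      rw [of_snoc_updateRow_castSucc]
      rfl
    · rw [of_snoc_updateRow_last]
  have key := filippov_algebra (Matrix.of fun i => drow (f i) x) (fun r => drow (g r) x)
      (fun k => hess (f k) x) (fun r => hess (g r) x) hS hG
  calc nambu (m + 1) (Fin.snoc g (nambu (m + 1) f)) x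
      = (Matrix.of (Fin.snoc (fun r => drow (g r) x) (fun j => ∑ k,
          ((Matrix.of fun i => drow (f i) x).updateRow k (hess (f k) x j)).det))).det := by
        show (Matrix.of fun i => drow ((Fin.snoc g (nambu (m+1) f) :
          Fin (m+1) → EuclideanSpace ℝ (Fin (m+1)) → ℝ) i) x).det = _
        refine congrArg Matrix.det (congrArg Matrix.of (funext fun i => ?_))
        refine Fin.lastCases ?_ ?_ i
        · simp only [Fin.snoc_last]
          funext j
          exact nambu_fderiv_apply' f hf x j
        · intro r
          simp
    _ = ∑ k, ((Matrix.of fun i => drow (f i) x).updateRow k (fun j =>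
          (∑ r, (Matrix.of (Fin.snoc (Function.update (fun r' => drow (g r') x) r
              (hess (g r) x j)) ((Matrix.of fun i => drow (f i) x) k))).det)
          + (Matrix.of (Fin.snoc (fun r => drow (g r) x) (hess (f k) x j))).det)).det := key
    _ = ∑ k : Fin (m + 1),
        nambu (m + 1) (Function.update f k (nambu (m + 1) (Fin.snoc g (f k)))) x := by
        refine Finset.sum_congr rfl fun k _ => ?_
        show _ = (Matrix.of fun i => drow (Function.update f k (nambu (m+1) (Fin.snoc g (f k))) i) x).det
        refine congrArg Matrix.det ?_
        refine (Matrix.ext fun i j => ?_)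
        rcases eq_or_ne i k with rfl | hik
        · rw [Matrix.updateRow_self]
          show _ = drow (Function.update f i (nambu (m+1) (Fin.snoc g (f i))) i) x j
          rw [Function.update_self]
          exact (hw i j).symm
        · rw [Matrix.updateRow_ne hik]
          show (Matrix.of fun i => drow (f i) x) i j = drow (Function.update f k _ i) x j
          rw [Function.update_of_ne hik]
          rfl
end
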